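/- arXiv:2003.02968 — 3 statements merged into one kernel-verified Lean document; each statement's English description precedes it below -/
import Mathlib

section
/- Let α : ℝ → ℝ be a locally Lipschitz extended class-K∞ function (strictly increasing, α(0) = 0, α(r) → ∞ as r → ∞, α(r) → -∞ as r → -∞), and suppose y : ℝ≥0 → ℝ is differentiable with ẏ(t) ≥ -α(y(t)) and y(0) < 0. Then y is nondecreasing wherever y < 0, y(t) ≥ y(0) for all t, and y(t) → 0 as t → ∞ provided y remains bounded above by 0; hence the set {y ≥ 0} is asymptotically attractive. -/
open Real Set Filter

/-!
Where `y < 0` the inequality `ẏ ≥ -α(y)` forces `ẏ > 0`, so `y` increases there, and a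
negative level `c` is a barrier that `y` cannot cross downwards, because `ẏ ≥ -α(c) > 0` at
every crossing time. If `y` stayed below `c < 0` forever, then `ẏ ≥ -α(c)` would make it grow
at least linearly; hence `y` exceeds every negative level and, by the barrier, stays above it.
-/

section

variable {α y : ℝ → ℝ}

theorem monotoneOn_of_deriv_ge_neg_comp_of_nonpos (hα : Monotone α) (hα0 : α 0 = 0)
    (hy : Differentiable ℝ y) {D : Set ℝ} (hD : Convex ℝ D)
    (hineq : ∀ t ∈ D, -α (y t) ≤ deriv y t) (hnonpos : ∀ t ∈ D, y t ≤ 0) :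
    MonotoneOn y D := by
  refine monotoneOn_of_deriv_nonneg hD hy.continuous.continuousOn hy.differentiableOn
    fun t ht => ?_
  have htD := interior_subset ht
  have : α (y t) ≤ 0 := hα0 ▸ hα (hnonpos t htD)
  linarith [hineq t htD]

theorem le_of_deriv_ge_neg_comp_of_le (hα : StrictMono α) (hα0 : α 0 = 0)
    (hy : Differentiable ℝ y) {s c : ℝ} (hineq : ∀ t ≥ s, -α (y t) ≤ deriv y t)
    (hc : c < 0) (hcs : c ≤ y s) {t : ℝ} (hst : s ≤ t) : c ≤ y t := by
  have hαc : α c < 0 := hα0 ▸ hα hc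
  have barrier := image_le_of_deriv_right_lt_deriv_boundary (f := fun u => -y u)
    (f' := fun u => -deriv y u) (B := fun _ => -c) (B' := fun _ => 0)
    hy.continuous.neg.continuousOn (fun u _ => (hy u).hasDerivAt.neg.hasDerivWithinAt)
    (neg_le_neg hcs) (fun _ => hasDerivAt_const _ _)
    (fun u hu hyu => by
      have hyu : y u = c := neg_injective hyu
      linarith [hineq u hu.1, hyu ▸ hαc])
    ⟨hst, le_rfl⟩
  exact neg_le_neg_iff.1 barrier

theorem exists_lt_of_deriv_ge_neg_comp (hα : StrictMono α) (hα0 : α 0 = 0)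
    (hy : Differentiable ℝ y) {s c : ℝ} (hineq : ∀ t ≥ s, -α (y t) ≤ deriv y t)
    (hc : c < 0) : ∃ t ≥ s, c < y t := by
  by_contra! hle
  set δ := -α c
  have hδ : 0 < δ := neg_pos.2 (hα0 ▸ hα hc)
  have hgrowth : ∀ t ≥ s, δ * (t - s) ≤ y t - y s := fun t ht =>
    (convex_Ici s).mul_sub_le_image_sub_of_le_deriv hy.continuous.continuousOn
      hy.differentiableOn (fun u hu => by
        rw [interior_Ici] at hu
        linarith [hineq u hu.le, hα.monotone (hle u hu.le)])
      s self_mem_Ici t ht ht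
  set t := s + (c - y s) / δ + 1
  have hδt : δ * (t - s) = c - y s + δ := by
    simp only [t]
    field_simp
    ring
  have ht : s ≤ t := by
    have : 0 ≤ (c - y s) / δ := div_nonneg (by linarith [hle s le_rfl]) hδ.le
    linarith
  linarith [hgrowth t ht, hle t ht]

end

theorem cbf_asymptotic_attractivity_general
    (α : ℝ → ℝ) (hαmono : StrictMono α)
    (hα0 : α 0 = 0)
    (y : ℝ → ℝ) (hy : Differentiable ℝ y)
    (hineq : ∀ t ≥ (0:ℝ), deriv y t ≥ -α (y t))
    (hy0 : y 0 < 0) :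
    (∀ s t, 0 ≤ s → s ≤ t → (∀ u ∈ Set.Icc s t, y u < 0) → y s ≤ y t) ∧
    (∀ t ≥ (0:ℝ), y 0 ≤ y t) ∧
    ((∀ t ≥ (0:ℝ), y t ≤ 0) → Tendsto y atTop (nhds 0)) := by
  refine ⟨fun s t hs hst hneg => ?_, fun t ht => ?_, fun hnonpos => ?_⟩
  · exact monotoneOn_of_deriv_ge_neg_comp_of_nonpos hαmono.monotone hα0 hy (convex_Icc s t)
      (fun u hu => hineq u (hs.trans hu.1)) (fun u hu => (hneg u hu).le)
      (left_mem_Icc.2 hst) (right_mem_Icc.2 hst) hst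
  · exact le_of_deriv_ge_neg_comp_of_le hαmono hα0 hy hineq hy0 le_rfl ht
  refine tendsto_order.2 ⟨fun a ha => ?_, fun a ha => ?_⟩
  · have ha2 : a / 2 < 0 := by linarith
    obtain ⟨T, hT, hyT⟩ := exists_lt_of_deriv_ge_neg_comp hαmono hα0 hy hineq ha2
    filter_upwards [eventually_ge_atTop T] with t ht
    have := le_of_deriv_ge_neg_comp_of_le hαmono hα0 hy (fun u hu => hineq u (hT.trans hu))
      ha2 hyT.le ht
    linarith
  · filter_upwards [eventually_ge_atTop 0] with t ht
    exact (hnonpos t ht).trans_lt ha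

/-- Scalar asymptotic-stability claim of the CBF theorem: with an extended
class-K∞ function `α`, a trajectory with `ẏ ≥ -α(y)` and `y 0 < 0` is
nondecreasing wherever it is negative, bounded below by `y 0`, and tends to `0`
provided it stays nonpositive. -/
theorem cbf_asymptotic_attractivity
    (α : ℝ → ℝ) (hαlip : LocallyLipschitz α) (hαmono : StrictMono α)
    (hα0 : α 0 = 0) (hαtop : Tendsto α atTop atTop) (hαbot : Tendsto α atBot atBot)
    (y : ℝ → ℝ) (hy : Differentiable ℝ y)
    (hineq : ∀ t ≥ (0:ℝ), deriv y t ≥ -α (y t))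
    (hy0 : y 0 < 0) :
    (∀ s t, 0 ≤ s → s ≤ t → (∀ u ∈ Set.Icc s t, y u < 0) → y s ≤ y t) ∧
    (∀ t ≥ (0:ℝ), y 0 ≤ y t) ∧
    ((∀ t ≥ (0:ℝ), y t ≤ 0) → Tendsto y atTop (nhds 0)) :=
  cbf_asymptotic_attractivity_general α hαmono hα0 y hy hineq hy0
end

section
/- Let u*(a, b) = max(b, 0)·a/‖a‖² be the minimizer of ‖u‖² subject to aᵀu ≥ b. If a : ℝ → ℝⁿ \ {0} and b : ℝ → ℝ are Lipschitz continuous and ‖a(t)‖ ≥ ε > 0 and |b(t)| ≤ B for all t, then t ↦ u*(a(t), b(t)) is Lipschitz continuous. -/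
/-!
Write `u*(a(t), b(t)) = max (b t) 0 • (‖a t‖⁻² • a t)`. The first factor is Lipschitz (since `max · 0`
is 1-Lipschitz) and bounded by `B`. The second is the image of `a(t)` under the inversion in the
unit sphere, which scales distances by `1 / (‖x‖‖y‖) ≤ 1 / ε²`, so it is Lipschitz and bounded by
`1 / ε`. A product of bounded Lipschitz maps is Lipschitz.
-/

open scoped NNReal

theorem LipschitzWith.smul_of_norm_le {α 𝕜 E : Type*} [PseudoMetricSpace α] [SeminormedRing 𝕜]
    [SeminormedAddCommGroup E] [Module 𝕜 E] [IsBoundedSMul 𝕜 E] {f : α → 𝕜} {g : α → E}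
    {Kf Kg Cf Cg : ℝ≥0} (hf : LipschitzWith Kf f) (hg : LipschitzWith Kg g)
    (hfC : ∀ x, ‖f x‖ ≤ Cf) (hgC : ∀ x, ‖g x‖ ≤ Cg) :
    LipschitzWith (Cf * Kg + Kf * Cg) fun x => f x • g x := by
  refine LipschitzWith.of_dist_le_mul fun x y => ?_
  have hsplit : f x • g x - f y • g y = f x • (g x - g y) + (f x - f y) • g y := by
    rw [smul_sub, sub_smul]; abel
  calc dist (f x • g x) (f y • g y)
      ≤ ‖f x‖ * ‖g x - g y‖ + ‖f x - f y‖ * ‖g y‖ := by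
        rw [dist_eq_norm, hsplit]
        exact (norm_add_le _ _).trans (add_le_add (norm_smul_le _ _) (norm_smul_le _ _))
    _ ≤ Cf * (Kg * dist x y) + Kf * dist x y * Cg := by
        rw [← dist_eq_norm, ← dist_eq_norm]
        gcongr
        exacts [hfC x, hg.dist_le_mul x y, hf.dist_le_mul x y, hgC y]
    _ = ↑(Cf * Kg + Kf * Cg) * dist x y := by push_cast; ring

section Inversion

variable {F : Type*} [NormedAddCommGroup F] [InnerProductSpace ℝ F]

theorem norm_inv_norm_sq_smul (x : F) : ‖(‖x‖ ^ 2)⁻¹ • x‖ = ‖x‖⁻¹ := by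
  rcases eq_or_ne ‖x‖ 0 with hx | hx
  · simp [hx]
  · rw [norm_smul, norm_inv, norm_pow, norm_norm]
    field_simp

theorem dist_inv_norm_sq_smul_le {ε : ℝ} (hε : 0 < ε) {x y : F} (hx : ε ≤ ‖x‖) (hy : ε ≤ ‖y‖) :
    dist ((‖x‖ ^ 2)⁻¹ • x) ((‖y‖ ^ 2)⁻¹ • y) ≤ dist x y / ε ^ 2 := by
  have hx0 : x ≠ 0 := norm_pos_iff.mp (hε.trans_le hx)
  have hy0 : y ≠ 0 := norm_pos_iff.mp (hε.trans_le hy)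
  have hinv := dist_div_norm_sq_smul hx0 hy0 1
  simp only [one_div, inv_pow, one_pow] at hinv
  rw [hinv, inv_mul_eq_div]
  gcongr
  nlinarith [hε.le.trans hx]

theorem LipschitzWith.inv_norm_sq_smul {α : Type*} [PseudoMetricSpace α] {a : α → F} {K ε : ℝ≥0}
    (ha : LipschitzWith K a) (hε : 0 < ε) (haε : ∀ t, ε ≤ ‖a t‖) :
    LipschitzWith (K / ε ^ 2) fun t => (‖a t‖ ^ 2)⁻¹ • a t := by
  refine LipschitzWith.of_dist_le_mul fun s t => ?_
  calc dist ((‖a s‖ ^ 2)⁻¹ • a s) ((‖a t‖ ^ 2)⁻¹ • a t)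
      ≤ dist (a s) (a t) / ε ^ 2 := dist_inv_norm_sq_smul_le hε (haε s) (haε t)
    _ ≤ K * dist s t / ε ^ 2 := by gcongr; exact ha.dist_le_mul s t
    _ = ↑(K / ε ^ 2) * dist s t := by push_cast; ring

end Inversion

/-- The QP solution map `u*(a, b) = (max b 0 / ‖a‖²) • a` composed with
Lipschitz time-varying data, with `‖a(t)‖` bounded away from zero and `b`
bounded, is Lipschitz in time. -/
theorem qp_solution_lipschitz_in_time {n : ℕ}
    (a : ℝ → EuclideanSpace ℝ (Fin n)) (b : ℝ → ℝ)
    (Ka Kb : NNReal) (haLip : LipschitzWith Ka a) (hbLip : LipschitzWith Kb b)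
    (ε B : ℝ) (hε : 0 < ε) (haLb : ∀ t, ε ≤ ‖a t‖) (hbB : ∀ t, |b t| ≤ B) :
    ∃ L : NNReal,
      LipschitzWith L (fun t => (max (b t) 0 / ‖a t‖ ^ 2) • a t) := by
  have hε' : (ε.toNNReal : ℝ) = ε := Real.coe_toNNReal _ hε.le
  have hmaxB : ∀ t, ‖max (b t) 0‖ ≤ B.toNNReal := fun t => by
    rw [Real.norm_of_nonneg (le_max_right _ _)]
    exact max_le ((le_abs_self _).trans ((hbB t).trans (Real.le_coe_toNNReal B)))
      (NNReal.coe_nonneg _)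
  have hinvB : ∀ t, ‖(‖a t‖ ^ 2)⁻¹ • a t‖ ≤ (ε.toNNReal)⁻¹ := fun t => by
    rw [norm_inv_norm_sq_smul, NNReal.coe_inv, hε']
    exact inv_anti₀ hε (haLb t)
  have hinvLip := haLip.inv_norm_sq_smul (Real.toNNReal_pos.mpr hε) fun t => hε'.le.trans (haLb t)
  have hu : (fun t => (max (b t) 0 / ‖a t‖ ^ 2) • a t)
      = fun t => max (b t) 0 • (‖a t‖ ^ 2)⁻¹ • a t := by
    simp only [div_eq_mul_inv, mul_smul]
  exact ⟨_, hu ▸ (hbLip.max_const 0).smul_of_norm_le hinvLip hmaxB hinvB⟩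
end

section
/- If y : ℝ≥0 → ℝ is differentiable, y(0) ∈ [0, M] for some M > 0, and ẏ(t) ≥ -γ·y(t) whenever y(t) ≤ 0, for some γ > 0, then y(t) ≥ 0 for all t ≥ 0. -/
open Set

/-- Take the last point `s` of `[a, b]` where `f ≥ 0`; past it `f < 0`, so
`f` is monotone on `[s, b]` and `f b ≥ f s ≥ 0`. -/
theorem nonneg_of_deriv_nonneg_of_nonpos {f : ℝ → ℝ} {a b : ℝ} (hab : a ≤ b)
    (hf : ContinuousOn f (Icc a b)) (hdf : DifferentiableOn ℝ f (Ioo a b))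
    (ha : 0 ≤ f a) (hderiv : ∀ x ∈ Ioo a b, f x ≤ 0 → 0 ≤ deriv f x) :
    0 ≤ f b := by
  by_contra! hb
  have hcompact : IsCompact (Icc a b ∩ f ⁻¹' Ici 0) :=
    isCompact_Icc.of_isClosed_subset (hf.preimage_isClosed_of_isClosed isClosed_Icc isClosed_Ici)
      inter_subset_left
  obtain ⟨s, ⟨⟨has, hsb⟩, hs⟩, hlast⟩ :=
    hcompact.exists_isGreatest ⟨a, ⟨left_mem_Icc.2 hab, ha⟩⟩
  have hneg : ∀ x ∈ Ioc s b, f x < 0 := fun x ⟨hsx, hxb⟩ => by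
    by_contra! hx
    exact (hlast ⟨⟨has.trans hsx.le, hxb⟩, hx⟩).not_gt hsx
  have hmono : MonotoneOn f (Icc s b) := by
    refine monotoneOn_of_deriv_nonneg (convex_Icc s b) (hf.mono (Icc_subset_Icc_left has))
      (hdf.mono ?_) fun x hx => ?_
    · simpa only [interior_Icc] using Ioo_subset_Ioo_left has
    · rw [interior_Icc] at hx
      exact hderiv x ⟨has.trans_lt hx.1, hx.2⟩ (hneg x (Ioo_subset_Ioc_self hx)).le
  have hfs : 0 ≤ f s := hs
  exact hb.not_ge (hfs.trans (hmono (left_mem_Icc.2 hsb) (right_mem_Icc.2 hsb) hsb))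

theorem scalar_forward_invariance_general
    (y : ℝ → ℝ) (hy : Differentiable ℝ y)
    (M : ℝ) (hy0 : y 0 ∈ Set.Icc 0 M)
    (γ : ℝ) (hγ : 0 < γ)
    (hineq : ∀ t ≥ (0:ℝ), y t ≤ 0 → deriv y t ≥ -γ * y t) :
    ∀ t ≥ (0:ℝ), 0 ≤ y t := by
  intro t ht
  exact nonneg_of_deriv_nonneg_of_nonpos ht hy.continuous.continuousOn hy.differentiableOn
    hy0.1 fun x hx hyx => by nlinarith [hineq x hx.1.le hyx]

/-- Nagumo-type scalar invariance: if `y(0) ∈ [0, M]` and `ẏ ≥ -γ y` whenever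
`y ≤ 0`, then `y` stays nonnegative for all `t ≥ 0`. -/
theorem scalar_forward_invariance
    (y : ℝ → ℝ) (hy : Differentiable ℝ y)
    (M : ℝ) (hM : 0 < M) (hy0 : y 0 ∈ Set.Icc 0 M)
    (γ : ℝ) (hγ : 0 < γ)
    (hineq : ∀ t ≥ (0:ℝ), y t ≤ 0 → deriv y t ≥ -γ * y t) :
    ∀ t ≥ (0:ℝ), 0 ≤ y t :=
  scalar_forward_invariance_general y hy M hy0 γ hγ hineq
end
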